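/- Let R be a commutative ring that is a ℚ-algebra and let a, b ∈ R. Then the Wronskian-type identity (x²/4 − 1)·(f₂″·f₁′ − f₂′·f₁″) = a·b·(f₂′·f₁ − f₂·f₁′) holds in R[[x]]. -/

import Mathlib

/-!
Both `f₁` and `f₂` satisfy the hypergeometric-type equation
`(x² - 4) f″ + (2(a + b) + 1) x f′ + 4ab f = 0`: on coefficients this ODE is the two-step
recurrence `4 (n + 2)(n + 1) cₙ₊₂ = (2a + n)(2b + n) cₙ`, which the defining products satisfy.
Eliminating the `f`-terms from the two equations gives the identity.
-/

open PowerSeries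

noncomputable def f₁ {R : Type*} [CommRing R] [Algebra ℚ R] (a b : R) : R⟦X⟧ :=
  PowerSeries.mk fun n =>
    if n % 2 = 0 then
      ((Nat.factorial n : ℚ))⁻¹ • ∏ r ∈ Finset.range (n / 2), ((a + (r : R)) * (b + (r : R)))
    else 0

noncomputable def f₂ {R : Type*} [CommRing R] [Algebra ℚ R] (a b : R) : R⟦X⟧ :=
  PowerSeries.mk fun n =>
    if n % 2 = 1 then
      ((Nat.factorial n : ℚ))⁻¹ • ∏ r ∈ Finset.range (n / 2),
        ((a + (r : R) + algebraMap ℚ R (1/2)) * (b + (r : R) + algebraMap ℚ R (1/2)))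
    else 0

noncomputable def f₃ {R : Type*} [CommRing R] [Algebra ℚ R] (a b : R) : R⟦X⟧ :=
  PowerSeries.mk fun n =>
    if n % 2 = 0 then
      ((Nat.factorial n : ℚ))⁻¹ • ∏ r ∈ Finset.range (n / 2), ((a - (r : R)) * (b - (r : R)))
    else 0

noncomputable def f₄ {R : Type*} [CommRing R] [Algebra ℚ R] (a b : R) : R⟦X⟧ :=
  PowerSeries.mk fun n =>
    if n % 2 = 1 then
      ((Nat.factorial n : ℚ))⁻¹ • ∏ r ∈ Finset.range (n / 2),
        ((a - (r : R) - algebraMap ℚ R (1/2)) * (b - (r : R) - algebraMap ℚ R (1/2)))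
    else 0

open Finset

section Operator

variable {R : Type*} [CommRing R]

theorem coeff_X_mul_derivative (f : R⟦X⟧) (n : ℕ) :
    coeff n (X * d⁄dX R f) = n * coeff n f := by
  cases n with
  | zero => simp
  | succ m => rw [coeff_succ_X_mul, coeff_derivative, mul_comm]; push_cast; rfl

theorem X_sq_mul_derivative_derivative (f : R⟦X⟧) :
    X ^ 2 * d⁄dX R (d⁄dX R f) = X * d⁄dX R (X * d⁄dX R f) - X * d⁄dX R f := by
  rw [Derivation.leibniz, derivative_X, smul_eq_mul, smul_eq_mul]
  ring

/-- Four times the hypergeometric operator of `₂F₁(a, b; 1/2; z)`, written in `x` with `z = x²/4`. -/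
noncomputable def hypergeomOp (a b : R) (f : R⟦X⟧) : R⟦X⟧ :=
  (X ^ 2 - 4) * d⁄dX R (d⁄dX R f) + C (2 * (a + b) + 1) * (X * d⁄dX R f) + C (4 * a * b) * f

theorem coeff_hypergeomOp (a b : R) (f : R⟦X⟧) (n : ℕ) :
    coeff n (hypergeomOp a b f) =
      (2 * a + n) * (2 * b + n) * coeff n f - 4 * ((n + 2) * (n + 1)) * coeff (n + 2) f := by
  have hX2 : (X ^ 2 - 4 : R⟦X⟧) * d⁄dX R (d⁄dX R f) =
      X * d⁄dX R (X * d⁄dX R f) - X * d⁄dX R f - C 4 * d⁄dX R (d⁄dX R f) := by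
    rw [sub_mul, X_sq_mul_derivative_derivative, map_ofNat]
  rw [hypergeomOp, hX2, map_add, map_add, coeff_C_mul, coeff_C_mul, map_sub, map_sub, coeff_C_mul]
  simp only [coeff_X_mul_derivative, coeff_derivative]
  push_cast
  ring

theorem hypergeomOp_eq_zero {a b : R} {f : R⟦X⟧}
    (hf : ∀ n : ℕ, 4 * ((n + 2) * (n + 1)) * coeff (n + 2) f =
      (2 * a + n) * (2 * b + n) * coeff n f) :
    hypergeomOp a b f = 0 := by
  ext n
  rw [coeff_hypergeomOp, hf, sub_self, map_zero]

theorem wronskian_of_hypergeomOp_eq_zero {a b : R} {f g : R⟦X⟧}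
    (hf : hypergeomOp a b f = 0) (hg : hypergeomOp a b g = 0) :
    (X ^ 2 - 4) * (d⁄dX R (d⁄dX R g) * d⁄dX R f - d⁄dX R g * d⁄dX R (d⁄dX R f)) =
      C (4 * a * b) * (d⁄dX R g * f - g * d⁄dX R f) := by
  rw [hypergeomOp] at hf hg
  linear_combination d⁄dX R f * hg - d⁄dX R g * hf

end Operator

section ParitySeries

variable {R : Type*} [CommRing R] [Algebra ℚ R]

/-- `∑ₖ (u 0 ⋯ u (k-1)) x^(2k+r) / (2k+r)!`. -/
noncomputable def paritySeries (r : ℕ) (u : ℕ → R) : R⟦X⟧ :=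
  mk fun n => if n % 2 = r then ((n.factorial : ℚ))⁻¹ • ∏ i ∈ range (n / 2), u i else 0

theorem natCast_mul_algebraMap_factorial_inv (n : ℕ) :
    ((n + 2 : R) * (n + 1)) * algebraMap ℚ R ((n + 2).factorial : ℚ)⁻¹ =
      algebraMap ℚ R (n.factorial : ℚ)⁻¹ := by
  have hq : ((n + 2 : ℚ) * (n + 1)) * ((n + 2).factorial : ℚ)⁻¹ = (n.factorial : ℚ)⁻¹ := by
    rw [Nat.factorial_succ, Nat.factorial_succ]
    push_cast
    field_simp
    ring
  rw [← hq, map_mul]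
  simp only [map_add, map_mul, map_natCast, map_ofNat, map_one]

theorem paritySeries_coeff_recurrence {r : ℕ} {a b : R} {u : ℕ → R}
    (hu : ∀ k : ℕ, 4 * u k = (2 * a + (2 * k + r : ℕ)) * (2 * b + (2 * k + r : ℕ))) (n : ℕ) :
    4 * ((n + 2) * (n + 1)) * coeff (n + 2) (paritySeries r u) =
      (2 * a + n) * (2 * b + n) * coeff n (paritySeries r u) := by
  simp only [paritySeries, coeff_mk, Nat.add_mod_right, show (n + 2) / 2 = n / 2 + 1 by omega]
  split_ifs with hr
  · have hn : 2 * (n / 2) + r = n := by omega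
    have hun := hu (n / 2)
    rw [hn] at hun
    simp only [prod_range_succ, Algebra.smul_def]
    linear_combination
      ((n + 2 : R) * (n + 1) * algebraMap ℚ R ((n + 2).factorial : ℚ)⁻¹ *
          ∏ i ∈ range (n / 2), u i) * hun +
        ((2 * a + n) * (2 * b + n) * ∏ i ∈ range (n / 2), u i) *
          natCast_mul_algebraMap_factorial_inv (R := R) n
  · simp

theorem hypergeomOp_f₁ (a b : R) : hypergeomOp a b (f₁ a b) = 0 :=
  hypergeomOp_eq_zero <| paritySeries_coeff_recurrence (r := 0) fun k => by push_cast; ring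

theorem hypergeomOp_f₂ (a b : R) : hypergeomOp a b (f₂ a b) = 0 := by
  have hhalf : 2 * algebraMap ℚ R (1 / 2) = 1 := by
    rw [← map_ofNat (algebraMap ℚ R) 2, ← map_mul]; norm_num
  refine hypergeomOp_eq_zero <| paritySeries_coeff_recurrence (r := 1) fun k => ?_
  push_cast
  linear_combination (2 * (a + b + 2 * k) + 2 * algebraMap ℚ R (1 / 2) + 1) * hhalf

end ParitySeries

/-- Wronskian identity: `(x²/4 − 1)·(f₂″·f₁′ − f₂′·f₁″) = a·b·(f₂′·f₁ − f₂·f₁′)`. -/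
theorem stmt7 {R : Type*} [CommRing R] [Algebra ℚ R] (a b : R) :
    ((1/4 : ℚ) • (PowerSeries.X : R⟦X⟧) ^ 2 - 1) *
        (d⁄dX R (d⁄dX R (f₂ a b)) * d⁄dX R (f₁ a b) -
          d⁄dX R (f₂ a b) * d⁄dX R (d⁄dX R (f₁ a b))) =
      C (a * b) * (d⁄dX R (f₂ a b) * f₁ a b - f₂ a b * d⁄dX R (f₁ a b)) := by
  have hquarter : (1 / 4 : ℚ) • (4 : R⟦X⟧) = 1 := by
    rw [Algebra.smul_def, ← map_ofNat (algebraMap ℚ R⟦X⟧) 4, ← map_mul]; norm_num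
  calc _ = (1 / 4 : ℚ) • ((X ^ 2 - 4) *
          (d⁄dX R (d⁄dX R (f₂ a b)) * d⁄dX R (f₁ a b) -
            d⁄dX R (f₂ a b) * d⁄dX R (d⁄dX R (f₁ a b)))) := by
        rw [← smul_mul_assoc, smul_sub, hquarter]
    _ = _ := by
        rw [wronskian_of_hypergeomOp_eq_zero (hypergeomOp_f₁ a b) (hypergeomOp_f₂ a b),
          mul_assoc, map_mul, map_ofNat, mul_assoc, ← smul_mul_assoc, hquarter, one_mul, map_mul]
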